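/- arXiv:1903.12172 — 2 statements merged into one kernel-verified Lean document; each statement's English description precedes it below -/
import Mathlib

section
/- Let 0 < h₀ < 1 and 0 < h ≤ h₀. The image of the rectangle [1, 1+h²] + i[-h, h] in ℂ under the map z ↦ h⁻¹·z^{1/2} (principal square root) is contained in a rectangle of the form [h⁻¹, h⁻¹(1 + c₁h²)] + i[-c₂, c₂], where c₁, c₂ > 0 depend only on h₀ and not on h. -/
open Complex Set

/-!
Write `w = z^{1/2}`, so that `w² = z` and `Re w ≥ 0`. From `Re z = (Re w)² - (Im w)²` one gets
`Re w ≥ √(Re z) ≥ 1`, and then `Im z = 2 Re w Im w` forces `|Im w| ≤ |Im z| / 2 ≤ h / 2`, which in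
turn gives `(Re w)² ≤ 1 + h² + h²/4 ≤ (1 + h²)²`. Multiplying by `h⁻¹` yields the box with
`c₁ = 1`, `c₂ = 1/2`.
-/

namespace Complex

lemma re_cpow_inv_two_nonneg (z : ℂ) : 0 ≤ (z ^ (2⁻¹ : ℂ)).re := by
  rw [cpow_inv_two_re]
  positivity

lemma sq_re_eq (w : ℂ) : (w ^ 2).re = w.re ^ 2 - w.im ^ 2 := by
  simp only [pow_two, mul_re]

lemma sq_im_eq (w : ℂ) : (w ^ 2).im = 2 * w.re * w.im := by
  simp only [pow_two, mul_im]
  ring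

lemma sqrt_re_sq_le_re {w : ℂ} (hw : 0 ≤ w.re) : √(w ^ 2).re ≤ w.re := by
  rw [Real.sqrt_le_left hw, sq_re_eq]
  nlinarith [sq_nonneg w.im]

lemma two_mul_sqrt_re_sq_mul_abs_im_le {w : ℂ} (hw : 0 ≤ w.re) :
    2 * √(w ^ 2).re * |w.im| ≤ |(w ^ 2).im| := by
  rw [sq_im_eq, abs_mul, abs_mul, abs_of_nonneg hw, abs_two]
  gcongr
  exact sqrt_re_sq_le_re hw

lemma sqrt_mem_box_of_sq_mem_box {w : ℂ} {h : ℝ} (hw : 0 ≤ w.re) (hre₁ : 1 ≤ (w ^ 2).re)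
    (hre₂ : (w ^ 2).re ≤ 1 + h ^ 2) (him : |(w ^ 2).im| ≤ h) :
    1 ≤ w.re ∧ w.re ≤ 1 + h ^ 2 ∧ |w.im| ≤ h / 2 := by
  have hsqrt : 1 ≤ √(w ^ 2).re := Real.one_le_sqrt.mpr hre₁
  have hre : 1 ≤ w.re := hsqrt.trans (sqrt_re_sq_le_re hw)
  have him' : |w.im| ≤ h / 2 := by
    nlinarith [two_mul_sqrt_re_sq_mul_abs_im_le hw, abs_nonneg w.im]
  refine ⟨hre, ?_, him'⟩
  have hre_sq : w.re ^ 2 ≤ (1 + h ^ 2) ^ 2 := by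
    have him_sq : w.im ^ 2 ≤ (h / 2) ^ 2 := by
      rw [← sq_abs]
      exact pow_le_pow_left₀ (abs_nonneg _) him' 2
    rw [sq_re_eq] at hre₂
    nlinarith [sq_nonneg h]
  exact (pow_le_pow_iff_left₀ (by linarith) (by positivity) two_ne_zero).mp hre_sq

end Complex

theorem stmt0_general (h₀ : ℝ) :
    ∃ c₁ c₂ : ℝ, 0 < c₁ ∧ 0 < c₂ ∧ ∀ h : ℝ, 0 < h → h ≤ h₀ →
      (fun z : ℂ => (h : ℂ)⁻¹ * z ^ ((1 : ℂ)/2)) ''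
          {z : ℂ | 1 ≤ z.re ∧ z.re ≤ 1 + h ^ 2 ∧ -h ≤ z.im ∧ z.im ≤ h}
        ⊆ {w : ℂ | h⁻¹ ≤ w.re ∧ w.re ≤ h⁻¹ * (1 + c₁ * h ^ 2) ∧ -c₂ ≤ w.im ∧ w.im ≤ c₂} := by
  refine ⟨1, 1 / 2, one_pos, one_half_pos, fun h hh _ => ?_⟩
  rintro _ ⟨z, ⟨hre₁, hre₂, him₁, him₂⟩, rfl⟩
  have hz : (z ^ (2⁻¹ : ℂ)) ^ 2 = z := cpow_ofNat_inv_pow z 2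
  obtain ⟨hw_re₁, hw_re₂, hw_im⟩ := sqrt_mem_box_of_sq_mem_box (re_cpow_inv_two_nonneg z)
    (by rwa [hz]) (by rwa [hz]) (by rw [hz]; exact abs_le.mpr ⟨him₁, him₂⟩)
  obtain ⟨hw_im₁, hw_im₂⟩ := abs_le.mp hw_im
  have hinv : 0 < h⁻¹ := inv_pos.mpr hh
  simp only [mem_ofPred_eq, one_div, ← ofReal_inv, re_ofReal_mul, im_ofReal_mul, one_mul]
  refine ⟨le_mul_of_one_le_right hinv.le hw_re₁, by gcongr, ?_, ?_⟩
  · calc -2⁻¹ = h⁻¹ * -(h / 2) := by field_simp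
      _ ≤ h⁻¹ * (z ^ (2⁻¹ : ℂ)).im := by gcongr
  · calc h⁻¹ * (z ^ (2⁻¹ : ℂ)).im ≤ h⁻¹ * (h / 2) := by gcongr
      _ = 2⁻¹ := by field_simp

/-- The image of the box `[1, 1+h²] + i[-h, h]` under `z ↦ h⁻¹ z^{1/2}` (principal square
root) is contained in a box `[h⁻¹, h⁻¹(1 + c₁ h²)] + i[-c₂, c₂]` with `c₁, c₂ > 0`
depending only on `h₀`, for all `0 < h ≤ h₀`. -/
theorem stmt0 (h₀ : ℝ) (hh₀ : 0 < h₀) (hh₀1 : h₀ < 1) :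
    ∃ c₁ c₂ : ℝ, 0 < c₁ ∧ 0 < c₂ ∧ ∀ h : ℝ, 0 < h → h ≤ h₀ →
      (fun z : ℂ => (h : ℂ)⁻¹ * z ^ ((1 : ℂ)/2)) ''
          {z : ℂ | 1 ≤ z.re ∧ z.re ≤ 1 + h ^ 2 ∧ -h ≤ z.im ∧ z.im ≤ h}
        ⊆ {w : ℂ | h⁻¹ ≤ w.re ∧ w.re ≤ h⁻¹ * (1 + c₁ * h ^ 2) ∧ -c₂ ≤ w.im ∧ w.im ≤ c₂} :=
  stmt0_general h₀
end

section
/- Let F be holomorphic on a neighborhood of the rectangle R = (w - 2a, w + 2a) + i(-δ_-, δ_+) with 0 < δ_+ < 1, and suppose |F(z)| ≤ M on R, |F(z)| ≤ 1/Im z for Im z > 0, z ∈ R. If additionally |F| ≤ M on all of R with M = exp(C h^{-L}) and a² ≥it C h^{-3L} δ², then |F(z)| ≤ δ⁻¹ e^{C+1} for z in the real interval [w - a, w + a]. (Semiclassical maximum principle, scalar version.) -/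
open Complex Real Set

/-!
Multiply `F` by the Gaussian weight `exp (-i ξ (z - x) - μ (z - x)²)`, which has modulus one at
the real point `x`, and apply the maximum principle on a rectangle slightly inside the given one.
With `ξ = C / t` for a top edge at height `t`, the weight costs `e^C` against the bound `1 / t` on
the top edge and cancels the a priori bound `exp (C h^{-L})` on the bottom edge, while
`μ = C h^{-L} / b²` cancels it on the vertical edges at distance `b` from `x`; the hypothesis
`a² ≥ C h^{-3L} δ²` is exactly what keeps the term `μ (Im z)²` below `1`. Letting `t → δ` gives
the bound `δ⁻¹ e^{C+1}`. For `h ≥ 1` the a priori bound alone suffices.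
-/

namespace SemiclassicalMaxPrinciple

noncomputable def gaussWeight (ξ μ x : ℝ) (z : ℂ) : ℂ :=
  cexp (-(I * ξ) * (z - x) - μ * (z - x) ^ 2)

lemma norm_gaussWeight (ξ μ x : ℝ) (z : ℂ) :
    ‖gaussWeight ξ μ x z‖ = rexp (ξ * z.im + μ * z.im ^ 2 - μ * (z.re - x) ^ 2) := by
  rw [gaussWeight, norm_exp]
  congr 1
  simp only [neg_mul, pow_two, sub_re, neg_re, mul_re, I_re, ofReal_re, zero_mul, I_im, ofReal_im,
    mul_zero, sub_self, mul_im, one_mul, zero_add, sub_im, sub_zero, zero_sub, neg_neg]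
  ring

lemma gaussWeight_self (ξ μ x : ℝ) : gaussWeight ξ μ x x = 1 := by
  simp [gaussWeight]

lemma differentiable_gaussWeight (ξ μ x : ℝ) : Differentiable ℂ (gaussWeight ξ μ x) := by
  unfold gaussWeight
  fun_prop

lemma setOf_re_im_mem_Ioo (x₁ x₂ y₁ y₂ : ℝ) :
    {z : ℂ | x₁ < z.re ∧ z.re < x₂ ∧ y₁ < z.im ∧ z.im < y₂} = Ioo x₁ x₂ ×ℂ Ioo y₁ y₂ := by
  ext z
  simp [mem_reProdIm, and_assoc]

theorem norm_le_of_gaussWeight_bounds {F : ℂ → ℂ} {x x₁ x₂ s t b ξ μ M T B : ℝ}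
    (hξ : 0 ≤ ξ) (hμ : 0 ≤ μ) (ht : 0 < t) (hts : t ≤ s) (hb : 0 < b)
    (hx₁ : x₁ + b ≤ x) (hx₂ : x + b ≤ x₂)
    (hF : DiffContOnCl ℂ F (Ioo x₁ x₂ ×ℂ Ioo (-s) t))
    (hM : ∀ z ∈ Icc x₁ x₂ ×ℂ Icc (-s) t, ‖F z‖ ≤ M)
    (hT : ∀ z ∈ Icc x₁ x₂ ×ℂ {t}, ‖F z‖ ≤ T)
    (hB_top : T * rexp (ξ * t + μ * t ^ 2) ≤ B)
    (hB_bottom : M * rexp (-(ξ * s) + μ * s ^ 2) ≤ B)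
    (hB_side : M * rexp (ξ * t + μ * s ^ 2 - μ * b ^ 2) ≤ B) :
    ‖F x‖ ≤ B := by
  have hx₁₂ : x₁ < x₂ := by linarith
  have hst : -s < t := by linarith
  have hxV : (x : ℂ) ∈ closure (Ioo x₁ x₂ ×ℂ Ioo (-s) t) := by
    rw [closure_reProdIm, closure_Ioo hx₁₂.ne, closure_Ioo hst.ne, mem_reProdIm]
    simp only [ofReal_re, ofReal_im, mem_Icc]
    exact ⟨⟨by linarith, by linarith⟩, by linarith, by linarith⟩
  suffices hfr : ∀ z ∈ frontier (Ioo x₁ x₂ ×ℂ Ioo (-s) t), ‖F z • gaussWeight ξ μ x z‖ ≤ B by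
    simpa [gaussWeight_self] using Complex.norm_le_of_forall_mem_frontier_norm_le
      ((Metric.isBounded_Ioo _ _).reProdIm (Metric.isBounded_Ioo _ _))
      (hF.smul (differentiable_gaussWeight ξ μ x).diffContOnCl) hfr hxV
  intro z hz
  rw [frontier_reProdIm, closure_Ioo hx₁₂.ne, closure_Ioo hst.ne, frontier_Ioo hst,
    frontier_Ioo hx₁₂] at hz
  have hz_sq : 0 ≤ μ * (z.re - x) ^ 2 := by positivity
  rw [norm_smul, norm_gaussWeight]
  rcases hz with ⟨hre, him | him⟩ | ⟨hre, him⟩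
  · have hzM : ‖F z‖ ≤ M := hM z ⟨hre, show z.im ∈ Icc (-s) t by rw [him]; exact ⟨le_rfl, hst.le⟩⟩
    refine le_trans (mul_le_mul hzM ?_ (exp_nonneg _) ((norm_nonneg _).trans hzM)) hB_bottom
    rw [him, exp_le_exp]
    nlinarith
  · have hzT : ‖F z‖ ≤ T := hT z ⟨hre, him⟩
    refine le_trans (mul_le_mul hzT ?_ (exp_nonneg _) ((norm_nonneg _).trans hzT)) hB_top
    rw [Set.mem_singleton_iff.1 him, exp_le_exp]
    linarith
  · have hre' : z.re ∈ Icc x₁ x₂ := by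
      rcases hre with hre | hre <;> rw [hre] <;> simp [hx₁₂.le]
    have hzM : ‖F z‖ ≤ M := hM z ⟨hre', him⟩
    have him_sq : z.im ^ 2 ≤ s ^ 2 := sq_le_sq' him.1 (him.2.trans hts)
    have hre_sq : b ^ 2 ≤ (z.re - x) ^ 2 := by
      rcases hre with hre | hre <;> rw [hre] <;> nlinarith
    refine le_trans (mul_le_mul hzM ?_ (exp_nonneg _) ((norm_nonneg _).trans hzM)) hB_side
    rw [exp_le_exp]
    nlinarith [mul_le_mul_of_nonneg_left him.2 hξ, mul_le_mul_of_nonneg_left him_sq hμ,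
      mul_le_mul_of_nonneg_left hre_sq hμ]

theorem norm_le_inv_mul_exp_of_lt {F : ℂ → ℂ} {w a δ p C t x : ℝ} (hC : 0 ≤ C) (ha : 0 < a)
    (hp : 1 ≤ p) (ht : 0 < t) (htδ : t < δ) (ht1 : t ≤ 1) (haδ : C * p ^ 3 * δ ^ 2 ≤ a ^ 2)
    (hF : DifferentiableOn ℂ F (Ioo (w - 2 * a) (w + 2 * a) ×ℂ Ioo (-(δ * p)) δ))
    (hM : ∀ z ∈ Ioo (w - 2 * a) (w + 2 * a) ×ℂ Ioo (-(δ * p)) δ, ‖F z‖ ≤ rexp (C * p))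
    (hIm : ∀ z ∈ Ioo (w - 2 * a) (w + 2 * a) ×ℂ Ioo (-(δ * p)) δ, 0 < z.im → ‖F z‖ ≤ 1 / z.im)
    (hx : x ∈ Icc (w - a) (w + a)) :
    ‖F x‖ ≤ t⁻¹ * rexp (C + 1) := by
  obtain ⟨hx₁, hx₂⟩ := hx
  -- The rectangle shrinks with `t / δ`, which makes `μ s² = C p³ δ² / a²` independent of `t`.
  set b := a * t / δ with hb_def
  set s := t * p with hs_def
  have hδ : 0 < δ := ht.trans htδ
  have hb : 0 < b := by positivity
  have hba : b < a := by
    rw [hb_def, div_lt_iff₀ hδ]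
    exact mul_lt_mul_of_pos_left htδ ha
  have hts : t ≤ s := le_mul_of_one_le_right ht.le hp
  have hsub : Icc (w - a - b) (w + a + b) ×ℂ Icc (-s) t ⊆
      Ioo (w - 2 * a) (w + 2 * a) ×ℂ Ioo (-(δ * p)) δ := by
    refine reProdIm_subset_iff.2 (prod_mono (Icc_subset_Ioo ?_ ?_) (Icc_subset_Ioo ?_ htδ))
    · linarith
    · linarith
    · exact neg_lt_neg (mul_lt_mul_of_pos_right htδ (by linarith))
  set μ := C * p / b ^ 2 with hμ_def
  have hμb : μ * b ^ 2 = C * p := by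
    rw [hμ_def]
    field_simp
  have hμs : μ * s ^ 2 ≤ 1 := by
    have : μ * s ^ 2 = C * p ^ 3 * δ ^ 2 / a ^ 2 := by
      rw [hμ_def, hb_def, hs_def]
      field_simp
    rw [this, div_le_one (by positivity)]
    exact haδ
  have hμt : μ * t ^ 2 ≤ 1 :=
    (mul_le_mul_of_nonneg_left (pow_le_pow_left₀ ht.le hts 2) (by positivity)).trans hμs
  have hexp : rexp (C + 1) ≤ t⁻¹ * rexp (C + 1) :=
    le_mul_of_one_le_left (exp_nonneg _) ((one_le_inv₀ ht).2 ht1)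
  refine norm_le_of_gaussWeight_bounds (ξ := C / t) (μ := μ) (s := s) (b := b) (T := t⁻¹)
    (by positivity) (by positivity) ht hts hb (by linarith) (by linarith) ?_
    (fun z hz => hM z (hsub hz)) ?_ ?_ ?_ ?_
  · refine (hF.mono ?_).diffContOnCl
    rw [closure_reProdIm, closure_Ioo (by linarith), closure_Ioo (by linarith)]
    exact hsub
  · intro z hz
    have hzt : z.im = t := hz.2
    rw [← hzt, ← one_div]
    exact hIm z (hsub ⟨hz.1, by rw [mem_preimage, hzt]; exact ⟨by linarith, le_rfl⟩⟩) (hzt ▸ ht)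
  · rw [div_mul_cancel₀ C ht.ne']
    gcongr
  · have hξs : C / t * s = C * p := by
      rw [hs_def]
      field_simp
    rw [hξs, ← Real.exp_add]
    exact le_trans (exp_le_exp.2 (by linarith)) hexp
  · rw [div_mul_cancel₀ C ht.ne', add_sub_assoc, hμb, ← Real.exp_add]
    exact le_trans (exp_le_exp.2 (by linarith)) hexp

lemma le_inv_mul_of_forall_mem_Ioo {A B δ : ℝ} (hδ : 0 < δ) (h : ∀ t ∈ Ioo 0 δ, A ≤ t⁻¹ * B) :
    A ≤ δ⁻¹ * B := by
  have hlim : Filter.Tendsto (fun t => t⁻¹ * B) (nhdsWithin δ (Iio δ)) (nhds (δ⁻¹ * B)) :=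
    tendsto_nhdsWithin_of_tendsto_nhds (((continuousAt_inv₀ hδ.ne').mul continuousAt_const).tendsto)
  exact ge_of_tendsto hlim (Filter.eventually_of_mem (Ioo_mem_nhdsLT hδ) h)

end SemiclassicalMaxPrinciple

open SemiclassicalMaxPrinciple in
theorem stmt10_general (F : ℂ → ℂ) (w a δ h L C : ℝ)
    (hh : 0 < h) (hδ0 : 0 < δ) (hδ1 : δ < 1) (hL : 0 < L) (hC : 0 < C) (ha : 0 < a)
    (haδ : a ^ 2 ≥ C * h ^ (-3 * L) * δ ^ 2)
    (U : Set ℂ)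
    (hRU : {z : ℂ | w - 2 * a < z.re ∧ z.re < w + 2 * a ∧
              -(δ * h ^ (-L)) < z.im ∧ z.im < δ} ⊆ U)
    (hF : DifferentiableOn ℂ F U)
    (hM : ∀ z : ℂ, z ∈ {z : ℂ | w - 2 * a < z.re ∧ z.re < w + 2 * a ∧
              -(δ * h ^ (-L)) < z.im ∧ z.im < δ} → ‖F z‖ ≤ Real.exp (C * h ^ (-L)))
    (hIm : ∀ z : ℂ, z ∈ {z : ℂ | w - 2 * a < z.re ∧ z.re < w + 2 * a ∧
              -(δ * h ^ (-L)) < z.im ∧ z.im < δ} → 0 < z.im →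
              ‖F z‖ ≤ 1 / z.im) :
    ∀ x : ℝ, x ∈ Icc (w - a) (w + a) → ‖F x‖ ≤ δ⁻¹ * Real.exp (C + 1) := by
  intro x hx
  rw [setOf_re_im_mem_Ioo] at hRU hM hIm
  rcases le_or_gt 1 h with h1 | h1
  · have hp : h ^ (-L) ≤ 1 := rpow_le_one_of_one_le_of_nonpos h1 (by linarith)
    have hxR : (x : ℂ) ∈ Ioo (w - 2 * a) (w + 2 * a) ×ℂ Ioo (-(δ * h ^ (-L))) δ := by
      simp only [mem_reProdIm, ofReal_re, ofReal_im, mem_Ioo, Left.neg_neg_iff]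
      exact ⟨⟨by linarith [hx.1], by linarith [hx.2]⟩, by positivity, hδ0⟩
    calc ‖F x‖ ≤ rexp (C * h ^ (-L)) := hM x hxR
      _ ≤ rexp (C + 1) := exp_le_exp.2 (by nlinarith)
      _ ≤ δ⁻¹ * rexp (C + 1) := le_mul_of_one_le_left (exp_nonneg _) ((one_le_inv₀ hδ0).2 hδ1.le)
  · have hp : 1 ≤ h ^ (-L) := one_le_rpow_of_pos_of_le_one_of_nonpos hh h1.le (by linarith)
    have haδ' : C * (h ^ (-L)) ^ 3 * δ ^ 2 ≤ a ^ 2 := by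
      rwa [← rpow_mul_natCast hh.le, Nat.cast_ofNat, neg_mul_comm, mul_comm L]
    exact le_inv_mul_of_forall_mem_Ioo hδ0 fun t ht => norm_le_inv_mul_exp_of_lt hC.le ha hp
      ht.1 ht.2 (ht.2.trans hδ1).le haδ' (hF.mono hRU) hM hIm hx

/-- Semiclassical maximum principle, scalar version: if `F` is holomorphic on a
neighborhood of the rectangle `(w-2a, w+2a) + i(-δ h^{-L}, δ)`, bounded by
`exp(C h^{-L})` there, bounded by `1/Im z` in the upper part, and
`a² ≥ C h^{-3L} δ²`, then `|F| ≤ δ⁻¹ e^{C+1}` on the real interval `[w-a, w+a]`. -/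
theorem stmt10 (F : ℂ → ℂ) (w a δ h L C : ℝ)
    (hh : 0 < h) (hδ0 : 0 < δ) (hδ1 : δ < 1) (hL : 0 < L) (hC : 0 < C) (ha : 0 < a)
    (haδ : a ^ 2 ≥ C * h ^ (-3 * L) * δ ^ 2)
    (U : Set ℂ) (hU : IsOpen U)
    (hRU : {z : ℂ | w - 2 * a < z.re ∧ z.re < w + 2 * a ∧
              -(δ * h ^ (-L)) < z.im ∧ z.im < δ} ⊆ U)
    (hF : DifferentiableOn ℂ F U)
    (hM : ∀ z : ℂ, z ∈ {z : ℂ | w - 2 * a < z.re ∧ z.re < w + 2 * a ∧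
              -(δ * h ^ (-L)) < z.im ∧ z.im < δ} → ‖F z‖ ≤ Real.exp (C * h ^ (-L)))
    (hIm : ∀ z : ℂ, z ∈ {z : ℂ | w - 2 * a < z.re ∧ z.re < w + 2 * a ∧
              -(δ * h ^ (-L)) < z.im ∧ z.im < δ} → 0 < z.im →
              ‖F z‖ ≤ 1 / z.im) :
    ∀ x : ℝ, x ∈ Icc (w - a) (w + a) → ‖F x‖ ≤ δ⁻¹ * Real.exp (C + 1) :=
  stmt10_general F w a δ h L C hh hδ0 hδ1 hL hC ha haδ U hRU hF hM hIm
end
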